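/- Let G = K_{2m} be the complete loopless graph on 2m vertices and let x be any configuration with light number L(x) = m. Then ML_G(x) = ML(G) = 0 and ML*_G(x) = ML*(G) = m; in particular ML*(G) − ML(G) = m = |V(G)|/2. -/

import Mathlib

structure LoopGraph (V : Type) [Fintype V] [DecidableEq V] where
  N : V → Finset V
  symm : ∀ u v, u ∈ N v ↔ v ∈ N u

namespace LoopGraph

variable {V : Type} [Fintype V] [DecidableEq V]

/-- Indicator vector of a finite set of vertices, as a configuration over `F_2`. -/
def chi (S : Finset V) : V → ZMod 2 := fun u => if u ∈ S then 1 else 0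

/-- One regular move of the sigma-game. -/
def RegStep (G : LoopGraph V) (x y : V → ZMod 2) : Prop :=
  ∃ v, y = x + chi (G.N v)

/-- One valid move of the lit-only sigma-game. -/
def ValidStep (G : LoopGraph V) (x y : V → ZMod 2) : Prop :=
  ∃ v, x v = 1 ∧ y = x + chi (G.N v)

def RegReach (G : LoopGraph V) : (V → ZMod 2) → (V → ZMod 2) → Prop :=
  Relation.ReflTransGen G.RegStep

def ValidReach (G : LoopGraph V) : (V → ZMod 2) → (V → ZMod 2) → Prop :=
  Relation.ReflTransGen G.ValidStep

/-- The light number of a configuration. -/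
def L (x : V → ZMod 2) : ℕ := (Finset.univ.filter fun v => x v = 1).card

/-- Minimum light number of a configuration for the sigma-game. -/
noncomputable def ML (G : LoopGraph V) (x : V → ZMod 2) : ℕ :=
  sInf (L '' {y | G.RegReach x y})

/-- Minimum light number of a configuration for the lit-only sigma-game. -/
noncomputable def MLs (G : LoopGraph V) (x : V → ZMod 2) : ℕ :=
  sInf (L '' {y | G.ValidReach x y})

/-- Minimum light number of the sigma-game on `G`. -/
noncomputable def MLmax (G : LoopGraph V) : ℕ := ⨆ x, G.ML x

/-- Minimum light number of the lit-only sigma-game on `G`. -/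
noncomputable def MLsmax (G : LoopGraph V) : ℕ := ⨆ x, G.MLs x

/-- Non-loop adjacency. -/
def Adj (G : LoopGraph V) (u w : V) : Prop := u ≠ w ∧ w ∈ G.N u

def Connected (G : LoopGraph V) : Prop :=
  ∀ u w : V, Relation.ReflTransGen G.Adj u w

/-- Degree, counting non-loop edges only. -/
def deg (G : LoopGraph V) (v : V) : ℕ := ((G.N v).erase v).card

/-- Underlying simple graph (loops discarded). -/
def simple (G : LoopGraph V) : SimpleGraph V where
  Adj := G.Adj
  symm := by
    refine ⟨fun u w h => ?_⟩
    exact ⟨h.1.symm, (G.symm w u).mp h.2⟩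
  loopless := by refine ⟨fun u h => ?_⟩; exact h.1 rfl

/-- Induced subgraph on a finite vertex subset. -/
def induce (G : LoopGraph V) (T : Finset V) : LoopGraph {u // u ∈ T} where
  N u := Finset.univ.filter fun w => w.val ∈ G.N u.val
  symm := by
    intro u w
    simp only [Finset.mem_filter, Finset.mem_univ, true_and]
    exact G.symm u.1 w.1

end LoopGraph

/-!
In `K_n` a move at `v` adds `1 + e_v` to the configuration, so moving once at every vertex of a
set `S` adds `#S • 1 + χ_S`. Taking `S` to be the set of lit vertices turns any configuration
into a constant one, and for even `n` the all-on configuration is cleared by moving at every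
vertex.

A valid move at a lit vertex keeps it lit and toggles all the others, so it sends the light
number `ℓ` to `n + 1 - ℓ`. Along valid moves the light number therefore only takes the values
`ℓ` and `n + 1 - ℓ`, which for `n = 2m` and `ℓ = m` are `m` and `m + 1`; and one valid move
brings any configuration with more than `m` lit vertices down to at most `m`.
-/

open Finset

lemma zmod_two_eq_zero_or_one (a : ZMod 2) : a = 0 ∨ a = 1 := by
  revert a; decide

namespace LoopGraph

variable {V : Type} [Fintype V]

lemma L_le_card (x : V → ZMod 2) : L x ≤ Fintype.card V := card_le_univ _

lemma L_zero : L (0 : V → ZMod 2) = 0 := by simp [L]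

variable [DecidableEq V]

lemma eq_chi_filter_eq_one (x : V → ZMod 2) : x = chi (univ.filter (x · = 1)) := by
  funext u
  rcases zmod_two_eq_zero_or_one (x u) with h | h <;> simp [chi, h]

section Reach

variable {G : LoopGraph V}

lemma regReach_add_sum (x : V → ZMod 2) (S : Finset V) :
    G.RegReach x (x + ∑ v ∈ S, chi (G.N v)) := by
  induction S using Finset.induction with
  | empty => rw [sum_empty, add_zero]; exact Relation.ReflTransGen.refl
  | insert a S ha ih =>
    refine ih.tail ⟨a, ?_⟩
    rw [sum_insert ha]
    abel

variable {x y : V → ZMod 2}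

lemma ML_le_L (h : G.RegReach x y) : G.ML x ≤ L y := Nat.sInf_le ⟨y, h, rfl⟩

lemma MLs_le_L (h : G.ValidReach x y) : G.MLs x ≤ L y := Nat.sInf_le ⟨y, h, rfl⟩

lemma le_MLs {k : ℕ} (h : ∀ y, G.ValidReach x y → k ≤ L y) : k ≤ G.MLs x :=
  le_csInf ⟨L x, x, .refl, rfl⟩ (by rintro _ ⟨y, hy, rfl⟩; exact h y hy)

end Reach

lemma chi_univ_erase (v : V) : chi (univ.erase v) = 1 + chi {v} := by
  funext u
  by_cases h : u = v
  · simp [chi, h]; decide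
  · simp [chi, h]

lemma sum_chi_univ_erase (S : Finset V) :
    ∑ v ∈ S, chi (univ.erase v) = (#S : V → ZMod 2) + chi S := by
  funext u
  simp only [chi_univ_erase, sum_add_distrib, sum_const, nsmul_eq_mul, Pi.add_apply,
    Finset.sum_apply, Pi.natCast_apply]
  simp [chi, sum_ite_eq]

lemma L_add_chi_univ_erase {x : V → ZMod 2} {v : V} (hv : x v = 1) :
    L (x + chi (univ.erase v)) = Fintype.card V + 1 - L x := by
  have hlit : univ.filter (fun u => (x + chi (univ.erase v)) u = 1)
      = insert v (univ.filter (x · = 1))ᶜ := by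
    ext u
    by_cases h : u = v
    · simp [chi, h, hv]
    · rcases zmod_two_eq_zero_or_one (x u) with hu | hu <;> simp [chi, h, hu]
  have hv' : v ∉ (univ.filter (x · = 1))ᶜ := by simp [hv]
  have := L_le_card x
  unfold L at *
  rw [hlit, card_insert_of_notMem hv', card_compl]
  omega

section Complete

variable {G : LoopGraph V}

lemma regReach_zero_of_complete (hG : ∀ v, G.N v = univ.erase v)
    (hV : Even (Fintype.card V)) (x : V → ZMod 2) : G.RegReach x 0 := by
  have reach_add_sum (y : V → ZMod 2) (S : Finset V) :
      G.RegReach y (y + ((#S : V → ZMod 2) + chi S)) := by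
    simpa only [hG, sum_chi_univ_erase] using regReach_add_sum (G := G) y S
  set T : Finset V := univ.filter (x · = 1)
  have to_const : G.RegReach x (#T : V → ZMod 2) := by
    convert reach_add_sum x T using 1
    conv_rhs => rw [eq_chi_filter_eq_one x]
    funext u
    simp only [Pi.add_apply]
    rw [add_left_comm, CharTwo.add_self_eq_zero, add_zero]
  have one_to_zero : G.RegReach 1 0 := by
    convert reach_add_sum 1 univ using 1
    funext u
    simp [chi, (ZMod.natCast_eq_zero_iff_even).mpr hV]
    decide
  rcases zmod_two_eq_zero_or_one (#T : ZMod 2) with h | h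
  · have hT : (#T : V → ZMod 2) = 0 := funext fun _ => h
    rwa [hT] at to_const
  · have hT : (#T : V → ZMod 2) = 1 := funext fun _ => h
    rw [hT] at to_const
    exact to_const.trans one_to_zero

lemma ML_eq_zero_of_complete (hG : ∀ v, G.N v = univ.erase v)
    (hV : Even (Fintype.card V)) (x : V → ZMod 2) : G.ML x = 0 :=
  Nat.le_zero.mp ((ML_le_L (regReach_zero_of_complete hG hV x)).trans_eq L_zero)

lemma L_validReach_of_complete (hG : ∀ v, G.N v = univ.erase v) {x y : V → ZMod 2}
    (h : G.ValidReach x y) : L y = L x ∨ L y = Fintype.card V + 1 - L x := by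
  induction h with
  | refl => exact .inl rfl
  | tail _ hstep ih =>
    obtain ⟨v, hv, rfl⟩ := hstep
    rw [hG, L_add_chi_univ_erase hv]
    have := L_le_card x
    omega

lemma two_mul_MLs_le_of_complete (hG : ∀ v, G.N v = univ.erase v) (x : V → ZMod 2) :
    2 * G.MLs x ≤ Fintype.card V + 1 := by
  have h_self : G.MLs x ≤ L x := MLs_le_L .refl
  obtain ⟨v, hv⟩ | hempty := (univ.filter (x · = 1)).eq_empty_or_nonempty.symm
  · have hv1 : x v = 1 := (mem_filter.mp hv).2
    have h_move : G.MLs x ≤ Fintype.card V + 1 - L x := by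
      rw [← L_add_chi_univ_erase hv1, ← hG]
      exact MLs_le_L (.single ⟨v, hv1, rfl⟩)
    omega
  · have : L x = 0 := by rw [L, hempty, card_empty]
    omega

lemma MLs_eq_L_of_complete (hG : ∀ v, G.N v = univ.erase v) {x : V → ZMod 2}
    (hx : 2 * L x = Fintype.card V) : G.MLs x = L x :=
  le_antisymm (MLs_le_L .refl) <| le_MLs fun _ hy => by
    rcases L_validReach_of_complete hG hy with h | h <;> omega

end Complete

end LoopGraph

open LoopGraph in
theorem complete_graph_ML_and_MLs
    (m : ℕ) (G : LoopGraph (Fin (2 * m)))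
    (hN : ∀ v, G.N v = Finset.univ.erase v)
    (x : Fin (2 * m) → ZMod 2) (hx : L x = m) :
    G.ML x = 0 ∧ G.MLmax = 0 ∧ G.MLs x = m ∧ G.MLsmax = m ∧
    G.MLsmax - G.MLmax = m := by
  have hcard : Fintype.card (Fin (2 * m)) = 2 * m := Fintype.card_fin _
  have hML (y) : G.ML y = 0 := ML_eq_zero_of_complete hN (by rw [hcard]; exact even_two_mul m) y
  have hMLs : G.MLs x = m := by rw [MLs_eq_L_of_complete hN (by omega), hx]
  have hMLmax : G.MLmax = 0 := Nat.le_zero.mp (ciSup_le fun y => (hML y).le)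
  have hMLsmax : G.MLsmax = m := by
    refine le_antisymm (ciSup_le fun y => ?_) ?_
    · have := two_mul_MLs_le_of_complete hN y
      omega
    · exact hMLs.ge.trans (le_ciSup (f := G.MLs) (Set.finite_range _).bddAbove x)
  exact ⟨hML x, hMLmax, hMLs, hMLsmax, by omega⟩
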